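/- Suppose (A,B) ∈ D with m ≥ 1 satisfies hypothesis (∗), j_1 ≥ 1, j_m < h, u⁻¹(b_{j_1}) < u⁻¹(b_{j_1−1}), and a_{i_m+1} > b_{j_m+1}. Set B̄ := (b_{j_1}, b_{j_1+1})·B (the cycle obtained from B by removing b_{j_1}) and Ā := (a_{i_m}, b_{j_m+1})·A (the cycle obtained from A by inserting b_{j_m+1} between a_{i_m+1} and a_{i_m}). Then (B̄,Ā) ∈ D̄, B·A = Ā·B̄, and k + h = k̄ + h̄. -/
import Mathlib


/-!
Common setup: the symmetric group `S_n` (`n ≥ 2`) is modeled as `Equiv.Perm (Fin (n+2))`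
(so every `n ≥ 2` is of the form `n+2` with `n : ℕ`).  The element `1` of `{1,…,n}` is
`0 : Fin (n+2)` and the element `n` is `Fin.last (n+1)`.
Composition of permutations is multiplication: `(C * C') x = C (C' x)`.
-/

open Equiv

namespace DblShortcut

variable {n : ℕ}

/-- The cycle `(n, a_k, …, a_1)` determined by the sequence `a_1, …, a_k`
(as `a : Fin k → Fin (n+2)`); when `k = 0` this is the identity. -/
def cycA {k : ℕ} (a : Fin k → Fin (n+2)) : Equiv.Perm (Fin (n+2)) :=
  (Fin.last (n+1) :: (List.ofFn a).reverse).formPerm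

/-- The cycle `(x, b_1, …, b_h)` determined by the base point `x` and the sequence
`b_1, …, b_h`; when `h = 0` this is the identity. -/
def cycB {h : ℕ} (x : Fin (n+2)) (b : Fin h → Fin (n+2)) : Equiv.Perm (Fin (n+2)) :=
  (x :: List.ofFn b).formPerm

/-- The length of the defining index sequence of a cycle as above:
`|support| - 1` (which is `0` for the identity, and `k` for `cycA a`, `h` for `cycB x b`). -/
def clen (C : Equiv.Perm (Fin (n+2))) : ℕ := C.support.card - 1

/-- The sequence `a_1, …, a_k` extended by `a_{k+1} := n`. -/
def asnoc {k : ℕ} (a : Fin k → Fin (n+2)) : Fin (k+1) → Fin (n+2) :=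
  Fin.snoc a (Fin.last (n+1))

/-- The sequence `b_1, …, b_h` prefixed by the base point `x` (`b_0 := x`). -/
def bcons {h : ℕ} (x : Fin (n+2)) (b : Fin h → Fin (n+2)) : Fin (h+1) → Fin (n+2) :=
  Fin.cons x b

/-- `a_t`, with the conventions `a_0 := n` and `a_{k+1} := n` (out-of-range values are `n`). -/
def aext {k : ℕ} (a : Fin k → Fin (n+2)) (t : ℕ) : Fin (n+2) :=
  if ht : 1 ≤ t ∧ t ≤ k then a ⟨t - 1, by omega⟩ else Fin.last (n+1)

/-- `b_t`, with the conventions `b_0 := 1` and `b_{h+1} := 1` (out-of-range values are `1`). -/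
def bext {h : ℕ} (b : Fin h → Fin (n+2)) (t : ℕ) : Fin (n+2) :=
  if ht : 1 ≤ t ∧ t ≤ h then b ⟨t - 1, by omega⟩ else 0

/-- Conditions (1) and (2) of the definition of `D` on the sequence `a_1 < … < a_k`:
`1 ≤ a_1 < … < a_k < n` and `v⁻¹(n) = u⁻¹(a_1) < u⁻¹(a_2) < … < u⁻¹(a_k) < u⁻¹(n)`
(with `v⁻¹(n) = u⁻¹(n)` when `k = 0`). -/
def DCondA (u v : Perm (Fin (n+2))) {k : ℕ} (a : Fin k → Fin (n+2)) : Prop :=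
  StrictMono a ∧ (∀ i, a i < Fin.last (n+1)) ∧
  v.symm (Fin.last (n+1)) = u.symm (asnoc a 0) ∧
  StrictMono fun i : Fin (k+1) => u.symm (asnoc a i)

/-- Conditions (3) and (4) of the definition of `D` on the sequence `b_1 < … < b_h`:
`1 < b_1 < … < b_h < n` and
`u⁻¹(A⁻¹(1)) < u⁻¹(A⁻¹(b_1)) < … < u⁻¹(A⁻¹(b_h)) = v⁻¹(1)`
(with `u⁻¹(A⁻¹(1)) = v⁻¹(1)` when `h = 0`). -/
def DCondB (u v A : Perm (Fin (n+2))) {h : ℕ} (b : Fin h → Fin (n+2)) : Prop :=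
  StrictMono b ∧ (∀ i, 0 < b i ∧ b i < Fin.last (n+1)) ∧
  (StrictMono fun i : Fin (h+1) => u.symm (A.symm (bcons 0 b i))) ∧
  u.symm (A.symm (bcons 0 b (Fin.last h))) = v.symm 0

/-- The set `D`: pairs `(A,B)` with `A = (n,a_k,…,a_1)`, `B = (1,b_1,…,b_h)`
satisfying conditions (1)–(4). -/
def memD (u v A B : Perm (Fin (n+2))) : Prop :=
  ∃ (k h : ℕ) (a : Fin k → Fin (n+2)) (b : Fin h → Fin (n+2)),
    A = cycA a ∧ B = cycB 0 b ∧ DCondA u v a ∧ DCondB u v A b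

/-- Conditions (a) and (b) of the definition of `D̄` on the sequence `b̄_1 < … < b̄_h̄`:
`1 < b̄_1 < … < b̄_h̄ ≤ n` and `u⁻¹(1) < u⁻¹(b̄_1) < … < u⁻¹(b̄_h̄) = v⁻¹(1)`
(with `u⁻¹(1) = v⁻¹(1)` when `h̄ = 0`). -/
def DbarCondB (u v : Perm (Fin (n+2))) {h : ℕ} (b : Fin h → Fin (n+2)) : Prop :=
  StrictMono b ∧ (∀ i, 0 < b i) ∧
  (StrictMono fun i : Fin (h+1) => u.symm (bcons 0 b i)) ∧
  u.symm (bcons 0 b (Fin.last h)) = v.symm 0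

/-- Conditions (c) and (d) of the definition of `D̄` on the sequence `ā_1 < … < ā_k̄`:
`1 ≤ ā_1 < … < ā_k̄ < n` and
`v⁻¹(n) = u⁻¹(B̄⁻¹(ā_1)) < … < u⁻¹(B̄⁻¹(ā_k̄)) < u⁻¹(B̄⁻¹(n))`
(with `v⁻¹(n) = u⁻¹(B̄⁻¹(n))` when `k̄ = 0`). -/
def DbarCondA (u v Bbar : Perm (Fin (n+2))) {k : ℕ} (a : Fin k → Fin (n+2)) : Prop :=
  StrictMono a ∧ (∀ i, a i < Fin.last (n+1)) ∧
  v.symm (Fin.last (n+1)) = u.symm (Bbar.symm (asnoc a 0)) ∧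
  StrictMono fun i : Fin (k+1) => u.symm (Bbar.symm (asnoc a i))

/-- The set `D̄`: pairs `(B̄,Ā)` with `B̄ = (1,b̄_1,…,b̄_h̄)`, `Ā = (n,ā_k̄,…,ā_1)`
satisfying conditions (a)–(d). -/
def memDbar (u v Bbar Abar : Perm (Fin (n+2))) : Prop :=
  ∃ (h k : ℕ) (b : Fin h → Fin (n+2)) (a : Fin k → Fin (n+2)),
    Bbar = cycB 0 b ∧ Abar = cycA a ∧ DbarCondB u v b ∧ DbarCondA u v Bbar a

section Generic

variable {N : ℕ}

lemma bext_eq_bcons {b : Fin N → Fin (n+2)} {t : ℕ} (ht : t ≤ N) :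
    bext b t = bcons 0 b ⟨t, by omega⟩ := by
  rcases Nat.eq_zero_or_pos t with rfl | h1
  · simp [bext, bcons]
  · rw [bext, dif_pos ⟨h1, ht⟩]
    have he : (⟨t, by omega⟩ : Fin (N+1)) = Fin.succ ⟨t-1, by omega⟩ := by
      ext; simp; omega
    rw [he, bcons, Fin.cons_succ]

lemma bext_succ {b : Fin N → Fin (n+2)} (i : Fin N) : bext b (i.1+1) = b i := by
  rw [bext, dif_pos ⟨by omega, by omega⟩]
  exact congrArg b (by ext; simp)

lemma bext_pos {b : Fin N → Fin (n+2)} {t : ℕ} (h1 : 1 ≤ t) (h2 : t ≤ N) :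
    bext b t = b ⟨t-1, by omega⟩ := dif_pos ⟨h1, h2⟩

lemma bext_big {b : Fin N → Fin (n+2)} {t : ℕ} (ht : N < t) : bext b t = 0 := by
  rw [bext, dif_neg (by omega)]

lemma asnoc_eq_aext {a : Fin N → Fin (n+2)} (i : Fin (N+1)) : asnoc a i = aext a (i.1+1) := by
  rcases Nat.lt_or_ge i.1 N with hi | hi
  · have he : i = Fin.castSucc ⟨i.1, hi⟩ := by ext; simp
    rw [he, asnoc, Fin.snoc_castSucc, aext, dif_pos ⟨by omega, by omega⟩]
    exact congrArg a (by ext; simp)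
  · have hN : i.1 = N := by omega
    have he : i = Fin.last N := by ext; simpa using hN
    rw [he, asnoc, Fin.snoc_last, aext, dif_neg (by omega)]

lemma aext_eq_asnoc {a : Fin N → Fin (n+2)} {t : ℕ} (h1 : 1 ≤ t) (ht : t ≤ N+1) :
    aext a t = asnoc a ⟨t-1, by omega⟩ := by
  rw [asnoc_eq_aext]
  congr 1
  simp
  omega

lemma aext_pos {a : Fin N → Fin (n+2)} {t : ℕ} (h1 : 1 ≤ t) (h2 : t ≤ N) :
    aext a t = a ⟨t-1, by omega⟩ := dif_pos ⟨h1, h2⟩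

lemma aext_zero {a : Fin N → Fin (n+2)} : aext a 0 = Fin.last (n+1) := by
  rw [aext, dif_neg (by omega)]

lemma aext_big {a : Fin N → Fin (n+2)} {t : ℕ} (ht : N < t) : aext a t = Fin.last (n+1) := by
  rw [aext, dif_neg (by omega)]

lemma cycB_eq_formPerm {b : Fin N → Fin (n+2)} :
    cycB 0 b = (List.ofFn (bcons 0 b)).formPerm := by
  rw [List.ofFn_succ]
  simp only [bcons, Fin.cons_zero, Fin.cons_succ]
  rfl

lemma ofFn_asnoc {a : Fin N → Fin (n+2)} :
    List.ofFn (asnoc a) = (List.ofFn a).concat (Fin.last (n+1)) := by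
  rw [List.ofFn_succ']
  simp [asnoc]

lemma cycA_eq_formPerm {a : Fin N → Fin (n+2)} :
    cycA a = ((List.ofFn (asnoc a)).formPerm)⁻¹ := by
  rw [← List.formPerm_reverse]
  rw [ofFn_asnoc]
  simp [cycA, List.concat_eq_append]

lemma formPerm_ofFn_apply {f : Fin (N+1) → Fin (n+2)} (hf : Function.Injective f)
    (t : ℕ) (ht : t < N+1) :
    (List.ofFn f).formPerm (f ⟨t, ht⟩) =
      f ⟨(t+1) % (N+1), Nat.mod_lt _ (by omega)⟩ := by
  have h1 := List.formPerm_apply_getElem (List.ofFn f) (List.nodup_ofFn.mpr hf) t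
    (by simpa using ht)
  simp only [List.length_ofFn] at h1
  rw [List.getElem_ofFn, List.getElem_ofFn] at h1
  exact h1

lemma cycB_apply {b : Fin N → Fin (n+2)} (hf : Function.Injective (bcons 0 b))
    {t : ℕ} (ht : t ≤ N) : cycB 0 b (bext b t) = bext b (t+1) := by
  rw [cycB_eq_formPerm, bext_eq_bcons ht, formPerm_ofFn_apply hf t (by omega)]
  rcases Nat.lt_or_ge t N with h | h
  · rw [bext_eq_bcons (by omega)]
    congr 1
    ext
    simp [Nat.mod_eq_of_lt (by omega : t+1 < N+1)]
  · have hN : t = N := by omega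
    subst hN
    rw [bext_big (by omega)]
    simp [bcons]

lemma formPerm_asnoc_apply {a : Fin N → Fin (n+2)} (hf : Function.Injective (asnoc a))
    {t : ℕ} (ht : t ≤ N) :
    (List.ofFn (asnoc a)).formPerm (aext a t) = aext a (t+1) := by
  rcases Nat.eq_zero_or_pos t with rfl | h1
  · rw [aext_zero]
    have he : Fin.last (n+1) = asnoc a ⟨N, by omega⟩ := by
      rw [asnoc_eq_aext, aext_big (by simp)]
    rw [he, formPerm_ofFn_apply hf N (by omega)]
    rw [asnoc_eq_aext]
    simp
  · rw [aext_eq_asnoc h1 (by omega), formPerm_ofFn_apply hf (t-1) (by omega)]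
    rw [asnoc_eq_aext]
    congr 1
    simp only [Fin.val_mk]
    rw [Nat.mod_eq_of_lt (by omega)]
    omega

lemma cycA_apply {a : Fin N → Fin (n+2)} (hf : Function.Injective (asnoc a))
    {t : ℕ} (h1 : 1 ≤ t) (ht : t ≤ N+1) : cycA a (aext a t) = aext a (t-1) := by
  rw [cycA_eq_formPerm, Perm.inv_eq_iff_eq, formPerm_asnoc_apply hf (by omega)]
  congr 1
  omega

lemma cycB_fixed {b : Fin N → Fin (n+2)} {x : Fin (n+2)}
    (hx : ∀ t, t ≤ N → x ≠ bext b t) : cycB 0 b x = x := by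
  rw [cycB_eq_formPerm]
  apply List.formPerm_apply_of_notMem
  intro hmem
  rw [List.mem_ofFn] at hmem
  obtain ⟨i, hi⟩ := hmem
  exact hx i.1 (by omega) (by rw [bext_eq_bcons (by omega), ← hi])

lemma cycA_fixed {a : Fin N → Fin (n+2)} {x : Fin (n+2)}
    (hx : ∀ t, 1 ≤ t → t ≤ N+1 → x ≠ aext a t) : cycA a x = x := by
  rw [cycA_eq_formPerm, Perm.inv_eq_iff_eq]
  symm
  apply List.formPerm_apply_of_notMem
  intro hmem
  rw [List.mem_ofFn] at hmem
  obtain ⟨i, hi⟩ := hmem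
  exact hx (i.1+1) (by omega) (by omega) (by rw [← asnoc_eq_aext, ← hi])

lemma cycB_mem_support {b : Fin N → Fin (n+2)} (hf : Function.Injective (bcons 0 b))
    (hN : 1 ≤ N) {x : Fin (n+2)} :
    x ∈ (cycB 0 b).support ↔ ∃ t, t ≤ N ∧ x = bext b t := by
  rw [cycB_eq_formPerm, List.support_formPerm_of_nodup _ (List.nodup_ofFn.mpr hf)
    (by intro y hy; apply_fun List.length at hy; simp at hy; omega)]
  rw [List.mem_toFinset, List.mem_ofFn]
  constructor
  · rintro ⟨i, hi⟩
    exact ⟨i.1, by omega, by rw [bext_eq_bcons (by omega), ← hi]⟩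
  · rintro ⟨t, ht, rfl⟩
    exact ⟨⟨t, by omega⟩, (bext_eq_bcons ht).symm⟩

lemma cycA_mem_support {a : Fin N → Fin (n+2)} (hf : Function.Injective (asnoc a))
    (hN : 1 ≤ N) {x : Fin (n+2)} :
    x ∈ (cycA a).support ↔ ∃ t, 1 ≤ t ∧ t ≤ N+1 ∧ x = aext a t := by
  rw [cycA_eq_formPerm, Equiv.Perm.support_inv, List.support_formPerm_of_nodup _
    (List.nodup_ofFn.mpr hf)
    (by intro y hy; apply_fun List.length at hy; simp at hy; omega),
    List.mem_toFinset, List.mem_ofFn]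
  constructor
  · rintro ⟨i, hi⟩
    exact ⟨i.1+1, by omega, by omega, by rw [← asnoc_eq_aext, ← hi]⟩
  · rintro ⟨t, ht1, ht, rfl⟩
    exact ⟨⟨t-1, by omega⟩, by rw [asnoc_eq_aext]; congr 1; simp; omega⟩

lemma cycB_support_card {b : Fin N → Fin (n+2)} (hf : Function.Injective (bcons 0 b))
    (hN : 1 ≤ N) : (cycB 0 b).support.card = N+1 := by
  rw [cycB_eq_formPerm, List.support_formPerm_of_nodup _ (List.nodup_ofFn.mpr hf)
    (by intro y hy; apply_fun List.length at hy; simp at hy; omega),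
    List.toFinset_card_of_nodup (List.nodup_ofFn.mpr hf)]
  simp

lemma cycA_support_card {a : Fin N → Fin (n+2)} (hf : Function.Injective (asnoc a))
    (hN : 1 ≤ N) :
    (cycA a).support.card = N+1 := by
  rw [cycA_eq_formPerm, Equiv.Perm.support_inv, List.support_formPerm_of_nodup _
    (List.nodup_ofFn.mpr hf)
    (by intro y hy; apply_fun List.length at hy; simp at hy; omega),
    List.toFinset_card_of_nodup (List.nodup_ofFn.mpr hf)]
  simp

end Generic

section Helpers

lemma bext_zero {N : ℕ} {b : Fin N → Fin (n+2)} : bext b 0 = 0 := by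
  rw [bext, dif_neg (by omega)]

lemma aext_succ {N : ℕ} {a : Fin N → Fin (n+2)} (i : Fin N) : aext a (i.1+1) = a i := by
  rw [aext, dif_pos ⟨by omega, by omega⟩]
  exact congrArg a (by ext; simp)

/-- The sequence of `B̄ = (1, b_1, …, b_{J1-1}, b_{J1+1}, …, b_h)`:
`b` with the entry at position `J1` removed. -/
def bbar {h : ℕ} (b : Fin h → Fin (n+2)) (J1 : ℕ) : Fin (h-1) → Fin (n+2) :=
  fun t => bext b (if t.1 + 1 < J1 then t.1 + 1 else t.1 + 2)

/-- The sequence of `Ā`: `a` with `b_{Jm+1}` inserted after position `Im`. -/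
def abar {k h : ℕ} (a : Fin k → Fin (n+2)) (b : Fin h → Fin (n+2)) (Im Jm : ℕ) :
    Fin (k+1) → Fin (n+2) :=
  fun t => if t.1+1 ≤ Im then aext a (t.1+1)
           else if t.1+1 = Im+1 then bext b (Jm+1) else aext a t.1

lemma bext_bbar {h : ℕ} (b : Fin h → Fin (n+2)) {J1 : ℕ} (hJ1 : 1 ≤ J1) (hJh : J1 ≤ h - 1)
    {s : ℕ} (hs : s ≤ h) :
    bext (bbar b J1) s = bext b (if s < J1 then s else s+1) := by
  rcases Nat.eq_zero_or_pos s with rfl | h1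
  · rw [if_pos (by omega), bext_zero, bext_zero]
  · rcases Nat.lt_or_ge s h with h2 | h2
    · rw [bext, dif_pos ⟨h1, by omega⟩]
      show bext b (if (s-1) + 1 < J1 then (s-1) + 1 else (s-1) + 2) = _
      have e1 : s - 1 + 1 = s := by omega
      have e2 : s - 1 + 2 = s + 1 := by omega
      rw [e1, e2]
    · have : s = h := by omega
      subst this
      rw [bext, dif_neg (by omega), if_neg (by omega), bext_big (by omega)]

lemma aext_abar {k h : ℕ} (a : Fin k → Fin (n+2)) (b : Fin h → Fin (n+2)) {Im Jm : ℕ}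
    (hImk : Im ≤ k) (s : ℕ) :
    aext (abar a b Im Jm) s =
      if s ≤ Im then aext a s else if s = Im+1 then bext b (Jm+1) else aext a (s-1) := by
  rcases Nat.eq_zero_or_pos s with rfl | h1
  · rw [if_pos (by omega), aext_zero, aext_zero]
  · rcases Nat.lt_or_ge s (k+2) with h2 | h2
    · rw [aext, dif_pos ⟨h1, by omega⟩]
      show (if (s-1)+1 ≤ Im then aext a ((s-1)+1)
            else if (s-1)+1 = Im+1 then bext b (Jm+1) else aext a (s-1)) = _
      have e1 : s - 1 + 1 = s := by omega
      rw [e1]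
    · rw [aext_big (by omega), if_neg (by omega), if_neg (by omega), aext_big (by omega)]

end Helpers

end DblShortcut

namespace DblShortcut

/-- Intersection data for `(A,B) ∈ D` with `m := |A_s ∩ B_s|`:
`A_s ∩ B_s = {c_1 < … < c_m}` and `c_l = a_{i_l} = b_{j_l}` with
`i_1 < … < i_m` in `{1,…,k}` and `j_1 < … < j_m` in `{0,1,…,h}`
(conventions `a_0 := n`, `b_0 := 1`, `a_{k+1} := n`, `b_{h+1} := 1`). -/
def InterD {n k h : ℕ} (a : Fin k → Fin (n+2)) (b : Fin h → Fin (n+2))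
    {m : ℕ} (i j : Fin m → ℕ) : Prop :=
  StrictMono i ∧ StrictMono j ∧
  (∀ l, 1 ≤ i l ∧ i l ≤ k) ∧ (∀ l, j l ≤ h) ∧
  (∀ l, aext a (i l) = bext b (j l)) ∧
  (cycA a).support ∩ (cycB 0 b).support
    = Finset.image (fun l => aext a (i l)) Finset.univ

/-- Intersection data for `(B̄,Ā) ∈ D̄` with `m := |Ā_s ∩ B̄_s|`:
`Ā_s ∩ B̄_s = {c̄_1 < … < c̄_m}` and `c̄_l = ā_{i_l} = b̄_{j_l}` with
`i_1 < … < i_m` in `{1,…,k̄+1}` and `j_1 < … < j_m` in `{1,…,h̄}`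
(conventions `ā_0 := n`, `b̄_0 := 1`, `ā_{k̄+1} := n`, `b̄_{h̄+1} := 1`). -/
def InterDbar {n h k : ℕ} (b : Fin h → Fin (n+2)) (a : Fin k → Fin (n+2))
    {m : ℕ} (i j : Fin m → ℕ) : Prop :=
  StrictMono i ∧ StrictMono j ∧
  (∀ l, 1 ≤ i l ∧ i l ≤ k + 1) ∧ (∀ l, 1 ≤ j l ∧ j l ≤ h) ∧
  (∀ l, aext a (i l) = bext b (j l)) ∧
  (cycA a).support ∩ (cycB 0 b).support
    = Finset.image (fun l => aext a (i l)) Finset.univ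

/-- Hypothesis (∗) (resp. (∗∗)): consecutive intersection indices differ by `1`,
i.e. `i_{r+1} − i_r = 1` and `j_{r+1} − j_r = 1` for all `r ∈ {1,…,m−1}`. -/
def StarHyp {m : ℕ} (i j : Fin m → ℕ) : Prop :=
  ∀ l : Fin m, ∀ hl : l.1 + 1 < m,
    i ⟨l.1 + 1, hl⟩ = i l + 1 ∧ j ⟨l.1 + 1, hl⟩ = j l + 1

end DblShortcut

namespace DblShortcut

set_option maxHeartbeats 2000000 in
/-- case 3 of the definition of `φ`.  Suppose `(A,B) ∈ D` with `m ≥ 1`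
satisfies (∗), `j_1 ≥ 1`, `j_m < h`, `u⁻¹(b_{j_1}) < u⁻¹(b_{j_1−1})` and
`a_{i_m+1} > b_{j_m+1}`.  With `B̄ := (b_{j_1}, b_{j_1+1})·B` and
`Ā := (a_{i_m}, b_{j_m+1})·A`, one has `(B̄,Ā) ∈ D̄`, `B·A = Ā·B̄` and `k + h = k̄ + h̄`. -/
theorem statement5 (n : ℕ) (u v : Equiv.Perm (Fin (n+2))) (k h : ℕ)
    (a : Fin k → Fin (n+2)) (b : Fin h → Fin (n+2))
    (hA : DCondA u v a) (hB : DCondB u v (cycA a) b)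
    (m : ℕ) (hm : 0 < m) (i j : Fin m → ℕ)
    (hinter : InterD a b i j) (hstar : StarHyp i j)
    (hj1 : 1 ≤ j ⟨0, hm⟩)
    (hjm : j ⟨m - 1, by omega⟩ < h)
    (hpos : u.symm (bext b (j ⟨0, hm⟩)) < u.symm (bext b (j ⟨0, hm⟩ - 1)))
    (hcmp : bext b (j ⟨m - 1, by omega⟩ + 1) < aext a (i ⟨m - 1, by omega⟩ + 1)) :
    ∀ Bb Ab : Equiv.Perm (Fin (n+2)),
      Bb = Equiv.swap (bext b (j ⟨0, hm⟩)) (bext b (j ⟨0, hm⟩ + 1)) * cycB 0 b →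
      Ab = Equiv.swap (aext a (i ⟨m - 1, by omega⟩)) (bext b (j ⟨m - 1, by omega⟩ + 1)) *
            cycA a →
      memDbar u v Bb Ab ∧ cycB 0 b * cycA a = Ab * Bb ∧ k + h = clen Ab + clen Bb := by
  intro Bb Ab hBbDef hAbDef
  obtain ⟨hi_mono, hj_mono, hik, hjh, hab, hsupp⟩ := hinter
  obtain ⟨hma, haL, haV, hgA⟩ := hA
  obtain ⟨hmb, hbP, hgB, hgBend⟩ := hB
  obtain ⟨I1, hI1def⟩ : ∃ x, x = i ⟨0, hm⟩ := ⟨_, rfl⟩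
  obtain ⟨J1, hJ1def⟩ : ∃ x, x = j ⟨0, hm⟩ := ⟨_, rfl⟩
  rw [← hJ1def] at hj1 hpos hBbDef
  -- index arithmetic for the intersection block
  have hIdx : ∀ r (hr : r < m), i ⟨r, hr⟩ = I1 + r ∧ j ⟨r, hr⟩ = J1 + r := by
    intro r
    induction r with
    | zero =>
      intro hr
      constructor
      · rw [Nat.add_zero, hI1def]
      · rw [Nat.add_zero, hJ1def]
    | succ p ih =>
      intro hr
      have hp : p < m := by omega
      obtain ⟨e1, e2⟩ := ih hp
      obtain ⟨f1, f2⟩ := hstar ⟨p, hp⟩ hr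
      exact ⟨by rw [f1, e1]; omega, by rw [f2, e2]; omega⟩
  rw [(hIdx (m-1) (by omega)).2] at hjm
  rw [(hIdx (m-1) (by omega)).1, (hIdx (m-1) (by omega)).2] at hcmp hAbDef
  have hI1k : 1 ≤ I1 ∧ I1 ≤ k := by rw [hI1def]; exact hik ⟨0, hm⟩
  have hImk : I1 + (m-1) ≤ k := by
    have h1 := (hik ⟨m-1, by omega⟩).2
    rw [(hIdx (m-1) (by omega)).1] at h1
    exact h1
  have hJmh : J1 + (m-1) < h := hjm
  have hh2 : 2 ≤ h := by omega
  have hblk : ∀ r, r < m → aext a (I1+r) = bext b (J1+r) := by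
    intro r hr
    have := hab ⟨r, hr⟩
    rwa [(hIdx r hr).1, (hIdx r hr).2] at this
  -- order facts
  have h0l : (0 : Fin (n+2)) < Fin.last (n+1) := by
    rw [Fin.lt_def]; simp
  have haLt : ∀ s t, 1 ≤ s → s < t → t ≤ k+1 → aext a s < aext a t := by
    intro s t hs hst ht
    rcases Nat.lt_or_ge t (k+1) with h2 | h2
    · rw [aext_pos hs (by omega), aext_pos (show 1 ≤ t by omega) (show t ≤ k by omega)]
      exact hma (by rw [Fin.mk_lt_mk]; omega)
    · have he : t = k+1 := by omega
      subst he
      rw [show aext a (k+1) = Fin.last (n+1) from aext_big (by omega),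
        aext_pos hs (show s ≤ k by omega)]
      exact haL _
  have hbLt : ∀ s t, s < t → t ≤ h → bext b s < bext b t := by
    intro s t hst ht
    rcases Nat.eq_zero_or_pos s with rfl | hs
    · rw [bext_zero, bext_pos (show 1 ≤ t by omega) ht]
      exact (hbP _).1
    · rw [bext_pos hs (show s ≤ h by omega), bext_pos (show 1 ≤ t by omega) ht]
      exact hmb (by rw [Fin.mk_lt_mk]; omega)
  have hbub : ∀ t, bext b t < Fin.last (n+1) := by
    intro t
    by_cases hr : 1 ≤ t ∧ t ≤ h
    · rw [bext_pos hr.1 hr.2]; exact (hbP _).2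
    · rw [bext, dif_neg hr]; exact h0l
  have hbpos' : ∀ s, 1 ≤ s → s ≤ h → 0 < bext b s := by
    intro s h1 h2
    rw [bext_pos h1 h2]; exact (hbP _).1
  have haext_inj : ∀ s t, 1 ≤ s → s ≤ k+1 → 1 ≤ t → t ≤ k+1 → aext a s = aext a t → s = t := by
    intro s t h1 h2 h3 h4 heq
    rcases Nat.lt_trichotomy s t with hc | hc | hc
    · exact absurd heq (ne_of_lt (haLt s t h1 hc h4))
    · exact hc
    · exact absurd heq.symm (ne_of_lt (haLt t s h3 hc h2))
  have hbext_inj : ∀ s t, s ≤ h → t ≤ h → bext b s = bext b t → s = t := by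
    intro s t h1 h2 heq
    rcases Nat.lt_trichotomy s t with hc | hc | hc
    · exact absurd heq (ne_of_lt (hbLt s t hc h2))
    · exact hc
    · exact absurd heq.symm (ne_of_lt (hbLt t s hc h1))
  have hfb : Function.Injective (bcons 0 b) := by
    intro s t hst
    apply Fin.ext
    refine hbext_inj s.1 t.1 (by omega) (by omega) ?_
    rw [bext_eq_bcons (by omega : s.1 ≤ h), bext_eq_bcons (by omega : t.1 ≤ h)]
    simpa [Fin.eta] using hst
  have hfa : Function.Injective (asnoc a) := by
    intro s t hst
    apply Fin.ext
    have h1 : s.1 + 1 = t.1 + 1 := by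
      refine haext_inj _ _ (by omega) (by omega) (by omega) (by omega) ?_
      rw [← asnoc_eq_aext, ← asnoc_eq_aext]
      exact hst
    omega
  have hachain : ∀ s t, 1 ≤ s → s < t → t ≤ k+1 → u.symm (aext a s) < u.symm (aext a t) := by
    intro s t h1 h2 h3
    have hst := hgA (show (⟨s-1, by omega⟩ : Fin (k+1)) < ⟨t-1, by omega⟩ by
      rw [Fin.mk_lt_mk]; omega)
    dsimp only at hst
    rwa [← aext_eq_asnoc h1 (by omega), ← aext_eq_asnoc (show 1 ≤ t by omega) h3] at hst
  have hbchain : ∀ s t, s < t → t ≤ h →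
      u.symm ((cycA a).symm (bext b s)) < u.symm ((cycA a).symm (bext b t)) := by
    intro s t h2 h3
    have hst := hgB (show (⟨s, by omega⟩ : Fin (h+1)) < ⟨t, by omega⟩ by
      rw [Fin.mk_lt_mk]; omega)
    dsimp only at hst
    rwa [← bext_eq_bcons (show s ≤ h by omega), ← bext_eq_bcons h3] at hst
  have hbendpt : u.symm ((cycA a).symm (bext b h)) = v.symm 0 := by
    have e : Fin.last h = (⟨h, by omega⟩ : Fin (h+1)) := rfl
    rw [bext_eq_bcons (le_refl h), ← e]
    exact hgBend
  have hAsupp : ∀ x : Fin (n+2),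
      x ∈ (cycA a).support ↔ ∃ t, 1 ≤ t ∧ t ≤ k+1 ∧ x = aext a t :=
    fun x => cycA_mem_support hfa (by omega)
  have hBsupp : ∀ x : Fin (n+2), x ∈ (cycB 0 b).support ↔ ∃ t, t ≤ h ∧ x = bext b t :=
    fun x => cycB_mem_support hfb (by omega)
  have hnotB : ∀ s t, 1 ≤ s → s ≤ k+1 → t ≤ h → (s < I1 ∨ I1 + (m-1) < s) →
      aext a s ≠ bext b t := by
    intro s t h1 h2 h3 h4 heq
    rcases Nat.lt_or_ge s (k+1) with h5 | h5
    · have hxA : aext a s ∈ (cycA a).support := (hAsupp _).mpr ⟨s, h1, by omega, rfl⟩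
      have hxB : aext a s ∈ (cycB 0 b).support := (hBsupp _).mpr ⟨t, h3, heq⟩
      have hx : aext a s ∈ (cycA a).support ∩ (cycB 0 b).support :=
        Finset.mem_inter.mpr ⟨hxA, hxB⟩
      rw [hsupp] at hx
      obtain ⟨l, -, hl⟩ := Finset.mem_image.mp hx
      have hsl : s = i l :=
        haext_inj _ _ h1 (by omega) (hik l).1 (by have := (hik l).2; omega) hl.symm
      have hil : i l = I1 + l.1 := (hIdx l.1 l.2).1
      have hlm : l.1 < m := l.2
      omega
    · have he : s = k+1 := by omega
      subst he
      rw [aext_big (by omega)] at heq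
      exact absurd heq.symm (ne_of_lt (hbub t))
  have hnotA : ∀ t s, t ≤ h → 1 ≤ s → s ≤ k+1 → (t < J1 ∨ J1 + (m-1) < t) →
      bext b t ≠ aext a s := by
    intro t s h1 h2 h3 h4 heq
    rcases Nat.lt_or_ge s (k+1) with h5 | h5
    · have hxA : aext a s ∈ (cycA a).support := (hAsupp _).mpr ⟨s, h2, by omega, rfl⟩
      have hxB : aext a s ∈ (cycB 0 b).support := (hBsupp _).mpr ⟨t, h1, heq.symm⟩
      have hx : aext a s ∈ (cycA a).support ∩ (cycB 0 b).support :=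
        Finset.mem_inter.mpr ⟨hxA, hxB⟩
      rw [hsupp] at hx
      obtain ⟨l, -, hl⟩ := Finset.mem_image.mp hx
      have heq2 : bext b t = bext b (j l) := by
        rw [heq, ← hl, hab l]
      have htl : t = j l := hbext_inj _ _ h1 (hjh l) heq2
      have hjl : j l = J1 + l.1 := (hIdx l.1 l.2).2
      have hlm : l.1 < m := l.2
      omega
    · have he : s = k+1 := by omega
      subst he
      rw [aext_big (by omega)] at heq
      exact absurd heq (ne_of_lt (hbub t))
  have hblk' : ∀ s, I1 ≤ s → s ≤ I1 + (m-1) → aext a s = bext b (J1 + (s - I1)) := by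
    intro s h1 h2
    have hr := hblk (s - I1) (by omega)
    rwa [show I1 + (s - I1) = s by omega] at hr
  have hblk0 : aext a I1 = bext b J1 := by
    have := hblk' I1 (le_refl _) (by omega)
    rwa [show J1 + (I1 - I1) = J1 by omega] at this
  have h0A : ∀ s, 1 ≤ s → s ≤ k+1 → aext a s ≠ 0 := by
    intro s h1 h2 heq
    by_cases hc : I1 ≤ s ∧ s ≤ I1 + (m-1)
    · rw [hblk' s hc.1 hc.2] at heq
      exact absurd heq (ne_of_gt (hbpos' _ (by omega) (by omega)))
    · exact hnotB s 0 h1 h2 (by omega) (by omega) (by rw [heq, bext_zero])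
  have hfnotA : ∀ s, 1 ≤ s → s ≤ k+1 → bext b (J1+(m-1)+1) ≠ aext a s :=
    fun s h1 h2 => hnotA (J1+(m-1)+1) s (by omega) h1 h2 (by omega)
  -- the new sequences
  set bb := bbar b J1 with hbbdef
  set ab := abar a b (I1+(m-1)) (J1+(m-1)) with habdef
  have hbbext : ∀ s, s ≤ h → bext bb s = bext b (if s < J1 then s else s+1) :=
    fun s hs => bext_bbar b hj1 (by omega) hs
  have habext : ∀ s, aext ab s =
      if s ≤ I1+(m-1) then aext a s
      else if s = I1+(m-1)+1 then bext b (J1+(m-1)+1) else aext a (s-1) :=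
    aext_abar a b (by omega)
  have hbbLt : ∀ s t, s < t → t ≤ h-1 → bext bb s < bext bb t := by
    intro s t hst ht
    rw [hbbext s (by omega), hbbext t (by omega)]
    split_ifs with c1 c2 c2
    · exact hbLt _ _ (by omega) (by omega)
    · exact hbLt _ _ (by omega) (by omega)
    · exact hbLt _ _ (by omega) (by omega)
    · exact hbLt _ _ (by omega) (by omega)
  have hbbext_inj : ∀ s t, s ≤ h-1 → t ≤ h-1 → bext bb s = bext bb t → s = t := by
    intro s t h1 h2 heq
    rcases Nat.lt_trichotomy s t with hc | hc | hc
    · exact absurd heq (ne_of_lt (hbbLt s t hc h2))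
    · exact hc
    · exact absurd heq.symm (ne_of_lt (hbbLt t s hc h1))
  have hfbb : Function.Injective (bcons 0 bb) := by
    intro s t hst
    apply Fin.ext
    refine hbbext_inj s.1 t.1 (by omega) (by omega) ?_
    rw [bext_eq_bcons (by omega : s.1 ≤ h-1), bext_eq_bcons (by omega : t.1 ≤ h-1)]
    simpa [Fin.eta] using hst
  have hef : aext a (I1+(m-1)) < bext b (J1+(m-1)+1) := by
    rw [hblk (m-1) (by omega)]
    exact hbLt _ _ (by omega) (by omega)
  have habLt : ∀ s t, 1 ≤ s → s < t → t ≤ k+2 → aext ab s < aext ab t := by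
    intro s t h1 h2 h3
    rw [habext s, habext t]
    by_cases c1 : s ≤ I1+(m-1)
    · rw [if_pos c1]
      by_cases c2 : t ≤ I1+(m-1)
      · rw [if_pos c2]; exact haLt s t h1 h2 (by omega)
      · rw [if_neg c2]
        by_cases c3 : t = I1+(m-1)+1
        · rw [if_pos c3]
          rcases Nat.lt_or_ge s (I1+(m-1)) with c4 | c4
          · exact lt_trans (haLt s (I1+(m-1)) h1 c4 (by omega)) hef
          · rw [show s = I1+(m-1) by omega]; exact hef
        · rw [if_neg c3]
          exact haLt s (t-1) h1 (by omega) (by omega)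
    · rw [if_neg c1]
      by_cases c2 : s = I1+(m-1)+1
      · rw [if_pos c2, if_neg (by omega), if_neg (by omega)]
        rcases Nat.lt_or_ge (I1+(m-1)+1) (t-1) with c4 | c4
        · exact lt_trans hcmp (haLt (I1+(m-1)+1) (t-1) (by omega) c4 (by omega))
        · rw [show t-1 = I1+(m-1)+1 by omega]; exact hcmp
      · rw [if_neg c2, if_neg (by omega), if_neg (by omega)]
        exact haLt (s-1) (t-1) (by omega) (by omega) (by omega)
  have habext_inj : ∀ s t, 1 ≤ s → s ≤ k+2 → 1 ≤ t → t ≤ k+2 → aext ab s = aext ab t → s = t := by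
    intro s t h1 h2 h3 h4 heq
    rcases Nat.lt_trichotomy s t with hc | hc | hc
    · exact absurd heq (ne_of_lt (habLt s t h1 hc h4))
    · exact hc
    · exact absurd heq.symm (ne_of_lt (habLt t s h3 hc h2))
  have hfab : Function.Injective (asnoc ab) := by
    intro s t hst
    apply Fin.ext
    have h1 : s.1 + 1 = t.1 + 1 := by
      refine habext_inj _ _ (by omega) (by omega) (by omega) (by omega) ?_
      rw [← asnoc_eq_aext, ← asnoc_eq_aext]
      exact hst
    omega
  -- action of `cycB 0 bb`
  have hBbfwd : ∀ s, s ≤ h → s ≠ J1 →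
      cycB 0 bb (bext b s) = bext b (if s+1 = J1 then J1+1 else s+1) := by
    intro s hs hsne
    rcases Nat.lt_or_ge s J1 with c1 | c1
    · rw [show bext b s = bext bb s from by rw [hbbext s hs, if_pos c1]]
      rw [cycB_apply hfbb (show s ≤ h-1 by omega)]
      rw [hbbext (s+1) (by omega)]
      by_cases c2 : s+1 = J1
      · rw [if_neg (by omega), if_pos c2, show s+1+1 = J1+1 by omega]
      · rw [if_pos (by omega), if_neg c2]
    · rw [show bext b s = bext bb (s-1) from by
        rw [hbbext (s-1) (by omega), if_neg (by omega), show s-1+1 = s by omega]]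
      rw [cycB_apply hfbb (show s-1 ≤ h-1 by omega), show s-1+1 = s by omega]
      rw [hbbext s hs, if_neg (by omega), if_neg (by omega)]
  have hBbfixf : ∀ x : Fin (n+2), (∀ t', t' ≤ h → t' ≠ J1 → x ≠ bext b t') →
      cycB 0 bb x = x := by
    intro x hx
    apply cycB_fixed
    intro t' ht'
    rw [hbbext t' (by omega)]
    split_ifs with c
    · exact hx t' (by omega) (by omega)
    · exact hx (t'+1) (by omega) (by omega)
  have hBbfix : ∀ x : Fin (n+2), (∀ t', t' ≤ h → t' ≠ J1 → x ≠ bext b t') →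
      (cycB 0 bb).symm x = x := by
    intro x hx
    calc (cycB 0 bb).symm x = (cycB 0 bb).symm (cycB 0 bb x) := by rw [hBbfixf x hx]
    _ = x := Equiv.symm_apply_apply _ _
  have hBbinv : ∀ s, 1 ≤ s → s ≤ h → s ≠ J1 →
      (cycB 0 bb).symm (bext b s) = bext b (if s = J1+1 then J1-1 else s-1) := by
    intro s h1 h2 h3
    rw [Equiv.symm_apply_eq]
    by_cases c : s = J1+1
    · rw [if_pos c, hBbfwd (J1-1) (by omega) (by omega), if_pos (by omega), c]
    · rw [if_neg c, hBbfwd (s-1) (by omega) (by omega), if_neg (by omega),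
        show s-1+1 = s by omega]
  -- action of `(cycA a).symm` on `b`-values
  have hgfix : ∀ s, s ≤ h → (s < J1 ∨ J1+(m-1) < s) → (cycA a).symm (bext b s) = bext b s := by
    intro s hs hso
    rw [Equiv.symm_apply_eq]
    symm
    apply cycA_fixed
    intro t' ht1 ht2
    exact hnotA s t' hs ht1 ht2 hso
  have hgblk : ∀ r, r < m → (cycA a).symm (bext b (J1+r)) = aext a (I1+r+1) := by
    intro r hr
    rw [Equiv.symm_apply_eq, cycA_apply hfa (by omega) (by omega),
      show I1+r+1-1 = I1+r by omega, hblk r hr]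
  have hgblk0 : (cycA a).symm (bext b J1) = aext a (I1+1) := by
    have e := hgblk 0 (by omega)
    exact e
  have hgblkIdx : ∀ s, J1 ≤ s → s < J1+(m-1) → (cycA a).symm (bext b s) = bext b (s+1) := by
    intro s h1 h2
    have e := hgblk (s-J1) (by omega)
    rw [show J1+(s-J1) = s by omega] at e
    rw [e, hblk' (I1+(s-J1)+1) (by omega) (by omega)]
    congr 1
    omega
  -- first swap identity: Bb is the cycle on bb
  have hBbar : Bb = cycB 0 bb := by
    rw [hBbDef]
    refine Equiv.ext fun x => ?_
    rw [Perm.mul_apply]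
    by_cases hx : ∃ t, t ≤ h ∧ x = bext b t
    · obtain ⟨t, ht, rfl⟩ := hx
      rw [cycB_apply hfb ht]
      by_cases h1 : t + 1 = J1
      · rw [show bext b (t+1) = bext b J1 from by rw [h1], Equiv.swap_apply_left]
        rw [hBbfwd t ht (by omega), if_pos h1]
      · by_cases h2 : t = J1
        · rw [show bext b (t+1) = bext b (J1+1) from by rw [h2], Equiv.swap_apply_right]
          rw [show bext b t = bext b J1 from by rw [h2]]
          symm
          apply hBbfixf
          intro t' ht' htne heq
          exact htne (hbext_inj J1 t' (by omega) ht' heq).symm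
        · have hne1 : bext b (t+1) ≠ bext b J1 := by
            intro heq
            rcases Nat.lt_or_ge t h with hc | hc
            · exact (show t+1 ≠ J1 from h1) (hbext_inj (t+1) J1 (by omega) (by omega) heq)
            · rw [bext_big (by omega)] at heq
              exact absurd heq.symm (ne_of_gt (hbpos' J1 (by omega) (by omega)))
          have hne2 : bext b (t+1) ≠ bext b (J1+1) := by
            intro heq
            rcases Nat.lt_or_ge t h with hc | hc
            · exact h2 (by
                have := hbext_inj (t+1) (J1+1) (by omega) (by omega) heq
                omega)
            · rw [bext_big (by omega)] at heq
              exact absurd heq.symm (ne_of_gt (hbpos' (J1+1) (by omega) (by omega)))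
          rw [Equiv.swap_apply_of_ne_of_ne hne1 hne2, hBbfwd t ht h2, if_neg h1]
    · push_neg at hx
      rw [cycB_fixed (fun t ht => hx t ht)]
      rw [Equiv.swap_apply_of_ne_of_ne (hx J1 (by omega)) (hx (J1+1) (by omega))]
      symm
      exact hBbfixf x (fun t' ht' _ => hx t' ht')
  -- second swap identity: Ab is the cycle on ab
  have hAbar : Ab = cycA ab := by
    rw [hAbDef]
    refine Equiv.ext fun x => ?_
    rw [Perm.mul_apply]
    by_cases hx : ∃ t, 1 ≤ t ∧ t ≤ k+1 ∧ x = aext a t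
    · obtain ⟨t, h1, h2, rfl⟩ := hx
      rw [cycA_apply hfa h1 h2]
      by_cases h3 : t = I1+(m-1)+1
      · rw [show aext a (t-1) = aext a (I1+(m-1)) from by rw [h3]; congr 1,
          Equiv.swap_apply_left]
        rw [show aext a t = aext ab (t+1) from by
          rw [habext (t+1), if_neg (by omega), if_neg (by omega)]; congr 1]
        rw [cycA_apply hfab (by omega) (by omega), show t+1-1 = t by omega]
        rw [habext t, if_neg (by omega), if_pos h3]
      · have hne1 : aext a (t-1) ≠ aext a (I1+(m-1)) := by
          rcases Nat.eq_zero_or_pos (t-1) with he | he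
          · rw [he, aext_zero]
            intro heq
            have hlt := haLt (I1+(m-1)) (k+1) (by omega) (by omega) (le_refl _)
            rw [show aext a (k+1) = Fin.last (n+1) from aext_big (by omega)] at hlt
            exact absurd heq.symm (ne_of_lt hlt)
          · intro heq
            have := haext_inj (t-1) (I1+(m-1)) he (by omega) (by omega) (by omega) heq
            omega
        have hne2 : aext a (t-1) ≠ bext b (J1+(m-1)+1) := by
          rcases Nat.eq_zero_or_pos (t-1) with he | he
          · rw [he, aext_zero]
            exact (ne_of_lt (hbub _)).symm
          · exact (hfnotA (t-1) he (by omega)).symm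
        rw [Equiv.swap_apply_of_ne_of_ne hne1 hne2]
        rcases Nat.lt_or_ge t (I1+(m-1)+1) with h4 | h4
        · rw [show aext a t = aext ab t from by rw [habext t, if_pos (by omega)]]
          rw [cycA_apply hfab h1 (by omega)]
          rw [habext (t-1), if_pos (by omega)]
        · rw [show aext a t = aext ab (t+1) from by
            rw [habext (t+1), if_neg (by omega), if_neg (by omega)]; congr 1]
          rw [cycA_apply hfab (by omega) (by omega), show t+1-1 = t by omega]
          rw [habext t, if_neg (by omega), if_neg h3]
    · by_cases hxf : x = bext b (J1+(m-1)+1)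
      · rw [show cycA a x = x from
          cycA_fixed (fun s hs1 hs2 heq => (hfnotA s hs1 hs2) (by rw [← hxf]; exact heq))]
        rw [hxf, Equiv.swap_apply_right]
        rw [show bext b (J1+(m-1)+1) = aext ab (I1+(m-1)+1) from by
          rw [habext, if_neg (by omega), if_pos rfl]]
        rw [cycA_apply hfab (by omega) (by omega), show I1+(m-1)+1-1 = I1+(m-1) by omega]
        rw [habext, if_pos (le_refl _)]
      · push_neg at hx
        rw [show cycA a x = x from cycA_fixed (fun s hs1 hs2 => hx s hs1 hs2)]
        rw [Equiv.swap_apply_of_ne_of_ne (hx (I1+(m-1)) (by omega) (by omega)) hxf]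
        symm
        apply cycA_fixed
        intro s hs1 hs2
        rw [habext s]
        split_ifs with c1 c2
        · exact hx s hs1 (by omega)
        · exact hxf
        · exact hx (s-1) (by omega) (by omega)
  -- the product identity
  have hprod : cycB 0 b * cycA a = cycA ab * cycB 0 bb := by
    refine Equiv.ext fun x => ?_
    rw [Perm.mul_apply, Perm.mul_apply]
    by_cases hxA : ∃ t, 1 ≤ t ∧ t ≤ k+1 ∧ x = aext a t
    · obtain ⟨t, h1, h2, rfl⟩ := hxA
      rw [cycA_apply hfa h1 h2]
      by_cases hc : I1 ≤ t-1 ∧ t-1 ≤ I1+(m-1)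
      · rw [hblk' (t-1) hc.1 hc.2, cycB_apply hfb (by omega)]
        by_cases hd : t = I1+(m-1)+1
        · rw [hBbfixf (aext a t) (fun t' ht' htne => hnotB t t' h1 h2 ht' (by omega))]
          rw [show aext a t = aext ab (t+1) from by
            rw [habext (t+1), if_neg (by omega), if_neg (by omega)]; congr 1]
          rw [cycA_apply hfab (by omega) (by omega), show t+1-1 = t by omega]
          rw [habext t, if_neg (by omega), if_pos hd]
          congr 1
          omega
        · have hxb : aext a t = bext b (J1+(t-I1)) := hblk' t (by omega) (by omega)
          rw [hxb, hBbfwd (J1+(t-I1)) (by omega) (by omega), if_neg (by omega)]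
          by_cases he : t = I1+(m-1)
          · rw [show bext b (J1+(t-I1)+1) = aext ab (I1+(m-1)+1) from by
              rw [habext, if_neg (by omega), if_pos rfl]; congr 1; omega]
            rw [cycA_apply hfab (by omega) (by omega),
              show I1+(m-1)+1-1 = I1+(m-1) by omega]
            rw [habext, if_pos (le_refl _)]
            rw [hblk' (I1+(m-1)) (by omega) (le_refl _)]
            congr 1
            omega
          · rw [show bext b (J1+(t-I1)+1) = aext ab (t+1) from by
              rw [habext (t+1), if_pos (by omega), hblk' (t+1) (by omega) (by omega)]
              congr 1; omega]
            rw [cycA_apply hfab (by omega) (by omega), show t+1-1 = t by omega]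
            rw [habext t, if_pos (by omega), hblk' t (by omega) (by omega)]
            congr 1
            omega
      · have hLfix : cycB 0 b (aext a (t-1)) = aext a (t-1) := by
          apply cycB_fixed
          intro t' ht'
          rcases Nat.eq_zero_or_pos (t-1) with he | he
          · rw [he, aext_zero]
            exact (ne_of_lt (hbub t')).symm
          · exact hnotB (t-1) t' he (by omega) ht' (by omega)
        rw [hLfix]
        by_cases hd : t ≤ I1
        · by_cases he : t = I1
          · rw [show aext a t = bext b J1 from by rw [he]; exact hblk0]
            rw [hBbfixf (bext b J1)
              (fun t' ht' htne heq => htne (hbext_inj J1 t' (by omega) ht' heq).symm)]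
            rw [show bext b J1 = aext ab I1 from by
              rw [habext I1, if_pos (by omega)]; exact hblk0.symm]
            rw [cycA_apply hfab (by omega) (by omega)]
            rw [habext (I1-1), if_pos (by omega)]
            congr 1
            omega
          · rw [hBbfixf (aext a t) (fun t' ht' htne => hnotB t t' h1 h2 ht' (by omega))]
            rw [show aext a t = aext ab t from by rw [habext t, if_pos (by omega)]]
            rw [cycA_apply hfab h1 (by omega)]
            rw [habext (t-1), if_pos (by omega)]
        · rw [hBbfixf (aext a t) (fun t' ht' htne => hnotB t t' h1 h2 ht' (by omega))]
          rw [show aext a t = aext ab (t+1) from by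
            rw [habext (t+1), if_neg (by omega), if_neg (by omega)]; congr 1]
          rw [cycA_apply hfab (by omega) (by omega), show t+1-1 = t by omega]
          rw [habext t, if_neg (by omega), if_neg (by omega)]
    · by_cases hxB : ∃ t, t ≤ h ∧ x = bext b t
      · obtain ⟨t, ht, rfl⟩ := hxB
        have hto : t < J1 ∨ J1+(m-1) < t := by
          by_contra hcon
          push_neg at hcon
          exact hxA ⟨I1+(t-J1), by omega, by omega, by
            rw [hblk' (I1+(t-J1)) (by omega) (by omega)]; congr 1; omega⟩
        rw [show cycA a (bext b t) = bext b t from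
          cycA_fixed (fun s hs1 hs2 => hnotA t s ht hs1 hs2 hto)]
        rw [cycB_apply hfb ht]
        rw [hBbfwd t ht (by omega)]
        by_cases hc : t+1 = J1
        · rw [if_pos hc]
          rcases Nat.lt_or_ge 1 m with hm2 | hm2
          · rw [show bext b (J1+1) = aext ab (I1+1) from by
              rw [habext (I1+1), if_pos (by omega)]
              exact (hblk 1 (by omega)).symm]
            rw [cycA_apply hfab (by omega) (by omega), show I1+1-1 = I1 by omega]
            rw [habext I1, if_pos (by omega), hblk0, hc]
          · rw [show bext b (J1+1) = aext ab (I1+(m-1)+1) from by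
              rw [habext, if_neg (by omega), if_pos rfl]; congr 1; omega]
            rw [cycA_apply hfab (by omega) (by omega),
              show I1+(m-1)+1-1 = I1+(m-1) by omega]
            rw [habext, if_pos (le_refl _)]
            rw [show I1+(m-1) = I1 by omega, hblk0, hc]
        · rw [if_neg hc]
          have hfix : ∀ s', 1 ≤ s' → s' ≤ k+1 → bext b (t+1) ≠ aext a s' := by
            intro s' hs1 hs2
            rcases Nat.lt_or_ge t h with hth | hth
            · exact hnotA (t+1) s' (by omega) hs1 hs2 (by omega)
            · rw [bext_big (by omega)]
              exact fun heq => h0A s' hs1 hs2 heq.symm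
          have hfix2 : bext b (t+1) ≠ bext b (J1+(m-1)+1) := by
            intro heq
            rcases Nat.lt_or_ge t h with hth | hth
            · have := hbext_inj (t+1) (J1+(m-1)+1) (by omega) (by omega) heq
              omega
            · rw [bext_big (by omega)] at heq
              exact absurd heq.symm (ne_of_gt (hbpos' _ (by omega) (by omega)))
          symm
          apply cycA_fixed
          intro s hs1 hs2
          rw [habext s]
          split_ifs with c1 c2
          · exact hfix s hs1 (by omega)
          · exact hfix2
          · exact hfix (s-1) (by omega) (by omega)
      · push_neg at hxA hxB
        rw [show cycA a x = x from cycA_fixed hxA, cycB_fixed hxB]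
        rw [hBbfixf x (fun t' ht' _ => hxB t' ht')]
        symm
        apply cycA_fixed
        intro s hs1 hs2
        rw [habext s]
        split_ifs with c1 c2
        · exact hxA s hs1 (by omega)
        · exact hxB (J1+(m-1)+1) (by omega)
        · exact hxA (s-1) (by omega) (by omega)
  -- chain for DbarCondB
  have hbbchain : ∀ s, s+1 ≤ h-1 →
      u.symm (bext bb s) < u.symm (bext bb (s+1)) := by
    intro s hs
    rw [hbbext s (by omega), hbbext (s+1) (by omega)]
    by_cases c1 : s+1 < J1
    · rw [if_pos (by omega), if_pos c1]
      have e := hbchain s (s+1) (by omega) (by omega)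
      rwa [hgfix s (by omega) (by omega), hgfix (s+1) (by omega) (by omega)] at e
    · by_cases c2 : s+1 = J1
      · rw [if_pos (by omega), if_neg (by omega)]
        have t1 := hbchain s (s+1) (by omega) (by omega)
        rw [hgfix s (by omega) (by omega), c2, hgblk0] at t1
        rcases Nat.lt_or_ge 1 m with hm2 | hm2
        · have e2 : aext a (I1+1) = bext b (J1+1) := hblk 1 (by omega)
          rw [e2, show J1+1 = s+1+1 from by omega] at t1
          exact t1
        · have t2 := hbchain (s+1) (s+2) (by omega) (by omega)
          rw [c2, hgblk0, hgfix (s+2) (by omega) (by omega)] at t2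
          exact lt_trans t1 t2
      · rw [if_neg (by omega), if_neg (by omega)]
        by_cases c3 : s+1 < J1+(m-1)
        · have t1 := hbchain s (s+1) (by omega) (by omega)
          rw [hgblkIdx s (by omega) (by omega), hgblkIdx (s+1) (by omega) (by omega)] at t1
          exact t1
        · by_cases c4 : s+1 = J1+(m-1)
          · have t1 := hbchain s (s+1) (by omega) (by omega)
            rw [hgblkIdx s (by omega) (by omega)] at t1
            have e := hgblk (m-1) (by omega)
            rw [show J1+(m-1) = s+1 from by omega] at e
            rw [e] at t1
            have t2 := hbchain (s+1) (s+2) (by omega) (by omega)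
            rw [e, hgfix (s+2) (by omega) (by omega)] at t2
            exact lt_trans t1 t2
          · have t1 := hbchain (s+1) (s+2) (by omega) (by omega)
            rw [hgfix (s+1) (by omega) (by omega), hgfix (s+2) (by omega) (by omega)] at t1
            exact t1
  have hCondB : DbarCondB u v bb := by
    refine ⟨?_, ?_, ?_, ?_⟩
    · intro s t hst
      have hst' : s.1 < t.1 := hst
      have e := hbbLt (s.1+1) (t.1+1) (by omega) (by omega)
      rwa [bext_succ s, bext_succ t] at e
    · intro p
      have e : bext bb (p.1+1) = bb p := bext_succ p
      rw [← e, hbbext (p.1+1) (by omega)]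
      split_ifs
      · exact hbpos' _ (by omega) (by omega)
      · exact hbpos' _ (by omega) (by omega)
    · rw [Fin.strictMono_iff_lt_succ]
      intro p
      have e1 : bcons 0 bb p.castSucc = bext bb p.1 := (bext_eq_bcons (by omega)).symm
      have e2 : bcons 0 bb p.succ = bext bb (p.1+1) := (bext_eq_bcons (by omega)).symm
      rw [e1, e2]
      exact hbbchain p.1 (by omega)
    · have e1 : bcons 0 bb (Fin.last (h-1)) = bext bb (h-1) := (bext_eq_bcons (le_refl _)).symm
      rw [e1, hbbext (h-1) (by omega), if_neg (by omega), show h-1+1 = h by omega]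
      rw [← hgfix h (le_refl _) (by omega)]
      exact hbendpt
  -- values of `(cycB 0 bb)⁻¹` on the entries of `ab`
  have hW : ∀ s, 1 ≤ s → s ≤ k+2 → (cycB 0 bb).symm (aext ab s) =
      if s ≤ I1 then aext a s else if s = I1+1 then bext b (J1-1) else aext a (s-1) := by
    intro s h1 h2
    by_cases c1 : s ≤ I1
    · rw [if_pos c1, habext s, if_pos (by omega)]
      by_cases c2 : s = I1
      · apply hBbfix
        intro t' ht' htne heq
        rw [c2, hblk0] at heq
        exact htne (hbext_inj J1 t' (by omega) ht' heq).symm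
      · apply hBbfix
        intro t' ht' htne
        exact hnotB s t' h1 (by omega) ht' (by omega)
    · by_cases c2 : s = I1+1
      · rw [if_neg c1, if_pos c2]
        by_cases c3 : s ≤ I1+(m-1)
        · rw [habext s, if_pos c3]
          rw [show aext a s = bext b (J1+1) from by rw [c2]; exact hblk 1 (by omega)]
          rw [hBbinv (J1+1) (by omega) (by omega) (by omega), if_pos rfl]
        · have hm1 : m = 1 := by omega
          rw [habext s, if_neg c3, if_pos (by omega)]
          rw [show J1+(m-1)+1 = J1+1 from by omega]
          rw [hBbinv (J1+1) (by omega) (by omega) (by omega), if_pos rfl]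
      · rw [if_neg c1, if_neg c2]
        by_cases c3 : s ≤ I1+(m-1)
        · rw [habext s, if_pos c3, hblk' s (by omega) (by omega)]
          rw [hBbinv (J1+(s-I1)) (by omega) (by omega) (by omega), if_neg (by omega)]
          rw [hblk' (s-1) (by omega) (by omega)]
          congr 1
          omega
        · by_cases c4 : s = I1+(m-1)+1
          · rw [habext s, if_neg (by omega), if_pos c4]
            rw [hBbinv (J1+(m-1)+1) (by omega) (by omega) (by omega), if_neg (by omega)]
            rw [show J1+(m-1)+1-1 = J1+(m-1) from by omega]
            rw [show s-1 = I1+(m-1) from by omega, ← hblk (m-1) (by omega)]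
          · rw [habext s, if_neg (by omega), if_neg c4]
            apply hBbfix
            intro t' ht' htne
            exact hnotB (s-1) t' (by omega) (by omega) ht' (by omega)
  have hCondA : DbarCondA u v Bb ab := by
    rw [hBbar]
    refine ⟨?_, ?_, ?_, ?_⟩
    · intro s t hst
      have hst' : s.1 < t.1 := hst
      have e := habLt (s.1+1) (t.1+1) (by omega) (by omega) (by omega)
      rwa [aext_succ s, aext_succ t] at e
    · intro p
      have e := habLt (p.1+1) (k+2) (by omega) (by omega) (le_refl _)
      rwa [aext_succ p, show aext ab (k+2) = Fin.last (n+1) from aext_big (by omega)] at e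
    · have e0 : asnoc ab (0 : Fin (k+2)) = aext ab 1 := asnoc_eq_aext 0
      rw [e0, hW 1 (le_refl _) (by omega), if_pos (by omega), haV]
      congr 1
      exact asnoc_eq_aext 0
    · rw [Fin.strictMono_iff_lt_succ]
      intro p
      have e1 : asnoc ab p.castSucc = aext ab (p.1+1) := asnoc_eq_aext _
      have e2 : asnoc ab p.succ = aext ab (p.1+2) := asnoc_eq_aext _
      rw [e1, e2, hW (p.1+1) (by omega) (by omega), hW (p.1+2) (by omega) (by omega)]
      by_cases d1 : p.1+1 < I1
      · rw [if_pos (by omega), if_pos (by omega)]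
        exact hachain _ _ (by omega) (by omega) (by omega)
      · by_cases d2 : p.1+1 = I1
        · rw [if_pos (by omega), if_neg (by omega), if_pos (by omega)]
          rw [show p.1+1 = I1 from d2, hblk0]
          exact hpos
        · by_cases d3 : p.1+1 = I1+1
          · rw [if_neg (by omega), if_pos d3, if_neg (by omega), if_neg (by omega)]
            have t1 := hbchain (J1-1) J1 (by omega) (by omega)
            rw [hgfix (J1-1) (by omega) (by omega), hgblk0] at t1
            rw [show p.1+2-1 = I1+1 from by omega]
            exact t1
          · rw [if_neg (by omega), if_neg (by omega), if_neg (by omega), if_neg (by omega)]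
            exact hachain _ _ (by omega) (by omega) (by omega)
  have hlenA : clen Ab = k+1 := by
    rw [hAbar, clen, cycA_support_card hfab (by omega)]
    omega
  have hlenB : clen Bb = h-1 := by
    rw [hBbar, clen, cycB_support_card hfbb (by omega)]
    omega
  exact ⟨⟨h-1, k+1, bb, ab, hBbar, hAbar, hCondB, hCondA⟩,
    by rw [hBbar, hAbar]; exact hprod, by omega⟩

end DblShortcut
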